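/- Basic-Step setup: n = r+s, A₁,…,A_m, C are symmetric n×n real matrices with A₁ = fromBlocks(D,0,0,0) for an r×r positive definite matrix D, and b ∈ ℝᵐ with b₁ = 0. If y ∈ ℝᵐ is feasible for the dual (D), i.e., C − Σ_{i=1}^m yᵢAᵢ ⪰ 0, then the truncation (y₂,…,y_m) is feasible for the reduced dual (D_pre), i.e., the lower-right s×s block (C − Σ_{i=2}^m yᵢAᵢ)₂₂ is positive semidefinite, and it has the same objective value: Σ_{i=2}^m bᵢyᵢ = Σ_{i=1}^m bᵢyᵢ. Consequently every objective value attained by a feasible solution of (D) is attained by a feasible solution of (D_pre), so val(D) ≤ val(D_pre). -/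

import Mathlib

open Matrix

theorem Fin.sum_univ_succ_of_apply_zero {M : Type*} [AddCommMonoid M] {m : ℕ}
    (f : Fin (m + 1) → M) (hf : f 0 = 0) : ∑ i : Fin m, f i.succ = ∑ i, f i := by
  rw [Fin.sum_univ_succ, hf, zero_add]

namespace Matrix

variable {n o : Type*}

theorem PosSemidef.toBlocks₂₂ {R : Type*} [Ring R] [PartialOrder R] [StarRing R]
    {M : Matrix (n ⊕ o) (n ⊕ o) R} (hM : M.PosSemidef) : M.toBlocks₂₂.PosSemidef :=
  hM.submatrix Sum.inr

theorem toBlocks₂₂_sub_smul_of_toBlocks₂₂_eq_zero {R α : Type*} [AddGroup α]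
    [SMulZeroClass R α] {M N : Matrix (n ⊕ o) (n ⊕ o) α} (hN : N.toBlocks₂₂ = 0) (c : R) :
    (M - c • N).toBlocks₂₂ = M.toBlocks₂₂ := by
  ext i j
  have hij : N (.inr i) (.inr j) = 0 := congrFun (congrFun hN i) j
  simp [toBlocks₂₂, hij]

theorem toBlocks₂₂_sub_sum_fin_succ {R α : Type*} [AddCommGroup α] [SMulZeroClass R α] {m : ℕ}
    (C : Matrix (n ⊕ o) (n ⊕ o) α) (A : Fin (m + 1) → Matrix (n ⊕ o) (n ⊕ o) α)
    (hA0 : (A 0).toBlocks₂₂ = 0) (y : Fin (m + 1) → R) :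
    (C - ∑ i : Fin m, y i.succ • A i.succ).toBlocks₂₂ = (C - ∑ i, y i • A i).toBlocks₂₂ := by
  rw [Fin.sum_univ_succ, add_comm, ← sub_sub, toBlocks₂₂_sub_smul_of_toBlocks₂₂_eq_zero hA0]

end Matrix

theorem sieve_basic_step_dual_general (r s m : ℕ)
    (A : Fin (m + 1) → Matrix (Fin r ⊕ Fin s) (Fin r ⊕ Fin s) ℝ)
    (C : Matrix (Fin r ⊕ Fin s) (Fin r ⊕ Fin s) ℝ)
    (D : Matrix (Fin r) (Fin r) ℝ)
    (hA0 : A 0 = fromBlocks D 0 0 0)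
    (b : Fin (m + 1) → ℝ) (hb0 : b 0 = 0) :
    (∀ y : Fin (m + 1) → ℝ, (C - ∑ i, y i • A i).PosSemidef →
        ((C - ∑ i : Fin m, y i.succ • A i.succ).toBlocks₂₂).PosSemidef ∧
        ∑ i : Fin m, b i.succ * y i.succ = ∑ i, b i * y i) ∧
    (∀ v : ℝ,
        (∃ y : Fin (m + 1) → ℝ, (C - ∑ i, y i • A i).PosSemidef ∧ ∑ i, b i * y i = v) →
        ∃ z : Fin m → ℝ, ((C - ∑ i : Fin m, z i • A i.succ).toBlocks₂₂).PosSemidef ∧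
          ∑ i : Fin m, b i.succ * z i = v) := by
  have hA0₂₂ : (A 0).toBlocks₂₂ = 0 := by rw [hA0, toBlocks_fromBlocks₂₂]
  have truncate : ∀ y : Fin (m + 1) → ℝ, (C - ∑ i, y i • A i).PosSemidef →
      ((C - ∑ i : Fin m, y i.succ • A i.succ).toBlocks₂₂).PosSemidef ∧
      ∑ i : Fin m, b i.succ * y i.succ = ∑ i, b i * y i := fun y hy =>
    ⟨toBlocks₂₂_sub_sum_fin_succ C A hA0₂₂ y ▸ hy.toBlocks₂₂,
      Fin.sum_univ_succ_of_apply_zero (fun i => b i * y i) (by rw [hb0, zero_mul])⟩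
  refine ⟨truncate, ?_⟩
  rintro v ⟨y, hy, rfl⟩
  exact ⟨fun i => y i.succ, truncate y hy⟩

/-- Basic-Step dual feasibility: if `y` is feasible for the dual (D), then its
truncation is feasible for the reduced dual (D_pre) with the same objective value;
consequently every objective value attained in (D) is attained in (D_pre). -/
theorem sieve_basic_step_dual (r s m : ℕ)
    (A : Fin (m + 1) → Matrix (Fin r ⊕ Fin s) (Fin r ⊕ Fin s) ℝ)
    (hA : ∀ i, (A i).IsSymm)
    (C : Matrix (Fin r ⊕ Fin s) (Fin r ⊕ Fin s) ℝ) (hC : C.IsSymm)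
    (D : Matrix (Fin r) (Fin r) ℝ) (hD : D.PosDef)
    (hA0 : A 0 = fromBlocks D 0 0 0)
    (b : Fin (m + 1) → ℝ) (hb0 : b 0 = 0) :
    (∀ y : Fin (m + 1) → ℝ, (C - ∑ i, y i • A i).PosSemidef →
        ((C - ∑ i : Fin m, y i.succ • A i.succ).toBlocks₂₂).PosSemidef ∧
        ∑ i : Fin m, b i.succ * y i.succ = ∑ i, b i * y i) ∧
    (∀ v : ℝ,
        (∃ y : Fin (m + 1) → ℝ, (C - ∑ i, y i • A i).PosSemidef ∧ ∑ i, b i * y i = v) →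
        ∃ z : Fin m → ℝ, ((C - ∑ i : Fin m, z i • A i.succ).toBlocks₂₂).PosSemidef ∧
          ∑ i : Fin m, b i.succ * z i = v) :=
  sieve_basic_step_dual_general r s m A C D hA0 b hb0
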